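/- arXiv:1812.00540 — 3 statements merged into one kernel-verified Lean document; each statement's English description precedes it below -/
import Mathlib

section
/- Let $z_1 = x + iy$ with $y < 0$ and let $\lambda \in \mathbb{R}$. Define $D(\alpha) = \frac{\lambda i}{2\pi} \frac{1}{\overline{\alpha - z_1}}$ for $\alpha \in \mathbb{R}$. Then $\frac{1}{2\pi} \int_{-\infty}^{\infty} \frac{|D(\alpha) - D(\beta)|^2}{(\alpha - \beta)^2} d\beta = \frac{\lambda^2}{4\pi^2} \frac{1}{|\alpha - z_1|^2} \cdot \frac{1}{2|y|}$. -/
/-!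
Since `a⁻¹ - b⁻¹ = (b - a) / (a b)`, the difference quotient `|D(α) - D(β)|² / (α - β)²` equals
`|c|² / (|α - z₁|² |β - z₁|²)` with `c = λi/(2π)`, so the singularity at `β = α` cancels and the
integrand is a multiple of the Cauchy kernel `1 / ((β - x)² + y²)`, whose integral is `π / |y|`.
-/

open MeasureTheory Complex Real
open ComplexConjugate

theorem integral_inv_sub_sq_add_sq {c : ℝ} (hc : c ≠ 0) (x : ℝ) :
    ∫ β : ℝ, ((β - x) ^ 2 + c ^ 2)⁻¹ = π / |c| := by
  have hscale (β : ℝ) : (β ^ 2 + c ^ 2)⁻¹ = (c ^ 2)⁻¹ * (1 + (c⁻¹ * β) ^ 2)⁻¹ := by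
    field_simp
    ring
  rw [integral_sub_right_eq_self (fun β => (β ^ 2 + c ^ 2)⁻¹) x]
  simp_rw [hscale]
  rw [integral_const_mul, Measure.integral_comp_inv_mul_left (fun t => (1 + t ^ 2)⁻¹) c,
    integral_univ_inv_one_add_sq, smul_eq_mul, ← sq_abs c]
  field_simp

theorem norm_inv_sub_inv {K : Type*} [NormedField K] {a b : K} (ha : a ≠ 0) (hb : b ≠ 0) :
    ‖a⁻¹ - b⁻¹‖ = ‖b - a‖ / (‖a‖ * ‖b‖) := by
  rw [inv_sub_inv ha hb, norm_div, norm_mul]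

namespace Complex

theorem sq_norm_ofReal_sub (w : ℂ) (β : ℝ) :
    ‖(β : ℂ) - w‖ ^ 2 = (β - w.re) ^ 2 + w.im ^ 2 := by
  rw [Complex.sq_norm, normSq_apply]
  simp only [sub_re, ofReal_re, sub_im, ofReal_im]
  ring

theorem ofReal_sub_ne_zero {w : ℂ} (hw : w.im ≠ 0) (β : ℝ) : (β : ℂ) - w ≠ 0 :=
  fun h => hw (by simpa using congrArg im h)

/-- The paper's `D` is `vortexTrace (λi/(2π)) z₁`. -/
noncomputable def vortexTrace (c w : ℂ) (α : ℝ) : ℂ := c * (1 / conj ((α : ℂ) - w))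

theorem norm_vortexTrace_sub_sq_div_sq {w : ℂ} (hw : w.im ≠ 0) (c : ℂ) {α β : ℝ}
    (hβ : β ≠ α) :
    ‖vortexTrace c w α - vortexTrace c w β‖ ^ 2 / (α - β) ^ 2 =
      ‖c‖ ^ 2 / ‖(α : ℂ) - w‖ ^ 2 * ((β - w.re) ^ 2 + w.im ^ 2)⁻¹ := by
  have hαw := ofReal_sub_ne_zero hw α
  have hβw := ofReal_sub_ne_zero hw β
  have hαβ : α - β ≠ 0 := sub_ne_zero.mpr hβ.symm
  rw [vortexTrace, vortexTrace, ← mul_sub, one_div, one_div, ← map_inv₀, ← map_inv₀, ← map_sub,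
    norm_mul, norm_conj, norm_inv_sub_inv hαw hβw, ← sq_norm_ofReal_sub,
    sub_sub_sub_cancel_right, ← ofReal_sub, norm_real, Real.norm_eq_abs, abs_sub_comm]
  have := norm_pos_iff.mpr hαw
  have := norm_pos_iff.mpr hβw
  field_simp
  rw [sq_abs]

theorem integral_norm_vortexTrace_sub_sq_div_sq {w : ℂ} (hw : w.im ≠ 0) (c : ℂ) (α : ℝ) :
    ∫ β : ℝ, ‖vortexTrace c w α - vortexTrace c w β‖ ^ 2 / (α - β) ^ 2 =
      ‖c‖ ^ 2 / ‖(α : ℂ) - w‖ ^ 2 * (π / |w.im|) := by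
  have hae := (volume.ae_ne α).mono fun β hβ => norm_vortexTrace_sub_sq_div_sq hw c hβ
  rw [integral_congr_ae hae, integral_const_mul, integral_inv_sub_sq_add_sq hw]

end Complex

/-- The nonlocal quadratic term in the Taylor sign quantity for a single point vortex
`z₁ = x + iy`, `y < 0`, with `D(α) = (λ i / (2π)) / conj(α - z₁)`:
`(1/(2π)) ∫ |D(α)-D(β)|²/(α-β)² dβ = (λ²/(4π²)) (1/|α-z₁|²) (1/(2|y|))`. -/
theorem stmt1 (x y lam : ℝ) (hy : y < 0) (z₁ : ℂ) (hz : z₁ = (x : ℂ) + (y : ℂ) * I)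
    (D : ℝ → ℂ)
    (hD : ∀ α : ℝ, D α = (lam : ℂ) * I / (2 * (π : ℂ)) *
        (1 / (starRingEnd ℂ) ((α : ℂ) - z₁)))
    (α : ℝ) :
    1 / (2 * π) * ∫ β : ℝ, ‖D α - D β‖ ^ 2 / (α - β) ^ 2 =
      lam ^ 2 / (4 * π ^ 2) * (1 / ‖(α : ℂ) - z₁‖ ^ 2) * (1 / (2 * |y|)) := by
  obtain rfl : D = vortexTrace (lam * I / (2 * π)) z₁ := funext hD
  have him : z₁.im = y := by simp [hz]
  have hc : ‖(lam : ℂ) * I / (2 * π)‖ ^ 2 = lam ^ 2 / (4 * π ^ 2) := by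
    rw [norm_div, norm_mul, norm_mul, norm_I, norm_real, norm_real, Complex.norm_two,
      Real.norm_of_nonneg pi_pos.le, Real.norm_eq_abs, mul_one, div_pow, mul_pow, sq_abs]
    norm_num
  rw [integral_norm_vortexTrace_sub_sq_div_sq (him ▸ hy.ne) _ α, hc, him]
  field_simp
end

section
/- Let $N \geq 1$, let $z_1, \ldots, z_N$ be complex numbers in the lower half plane, and let $\lambda_1, \ldots, \lambda_N \in \mathbb{R}$. Define $D(\alpha) = \sum_{j=1}^N \frac{\lambda_j i}{2\pi} \frac{1}{\overline{\alpha - z_j}}$ for $\alpha \in \mathbb{R}$. Then for every $\alpha \in \mathbb{R}$, $\frac{1}{2\pi} \int_{-\infty}^{\infty} \frac{|D(\alpha) - D(\beta)|^2}{(\alpha - \beta)^2} d\beta = \sum_{1 \leq j, k \leq N} \frac{\lambda_j \lambda_k}{(2\pi)^2} \frac{1}{(\alpha - z_j)\overline{(\alpha - z_k)}} \cdot \frac{i}{\overline{z_k} - z_j}$. -/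
open MeasureTheory Complex Real

/-!
With `w j = conj (z j)` in the upper half plane, `D β = ∑ c j / (β - w j)`, so the difference
quotient `(D α - D β) / (α - β)` is `∑ a j / (β - w j)` with `a j = c j / (α - w j)`. Its squared
modulus is the double sum of `a j * conj (a k) / ((β - w j) (β - z k))`, and for `Im w > 0 > Im z`
partial fractions give `∫ dβ / ((β - w) (β - z)) = 2πi / (w - z)`: a primitive of
`1 / (β - w) - 1 / (β - z)` is `log |β - w| - log |β - z|` plus `i` times a difference of arctangents;
its real part vanishes at both ends, while its imaginary part increases by `2π` because `w` and `z`
lie on opposite sides of the real line.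
-/

open Filter Topology Bornology ComplexConjugate

lemma normSq_ofReal_sub (x : ℝ) (w : ℂ) : normSq (x - w) = (x - w.re) ^ 2 + w.im ^ 2 := by
  simp [normSq_apply]; ring

lemma ofReal_sub_ne_zero (x : ℝ) {w : ℂ} (hw : w.im ≠ 0) : (x : ℂ) - w ≠ 0 := by
  intro h
  exact hw (by simpa using congrArg Complex.im h.symm)

lemma integrable_inv_sub_sq_add_sq (a : ℝ) {b : ℝ} (hb : b ≠ 0) :
    Integrable fun x : ℝ => ((x - a) ^ 2 + b ^ 2)⁻¹ := by
  have h := ((integrable_inv_one_add_sq.comp_div hb).comp_sub_right a).const_mul (b ^ 2)⁻¹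
  refine h.congr (.of_forall fun x => ?_)
  field_simp
  ring

lemma memLp_two_inv_ofReal_sub {w : ℂ} (hw : w.im ≠ 0) :
    MemLp (fun x : ℝ => ((x : ℂ) - w)⁻¹) 2 := by
  have hcont : Continuous fun x : ℝ => ((x : ℂ) - w)⁻¹ :=
    (continuous_ofReal.sub continuous_const).inv₀ fun x => ofReal_sub_ne_zero x hw
  refine (memLp_two_iff_integrable_sq_norm hcont.aestronglyMeasurable).2 ?_
  refine (integrable_inv_sub_sq_add_sq w.re hw).congr (.of_forall fun x => ?_)
  simp only [norm_inv, inv_pow, ← normSq_eq_norm_sq, normSq_ofReal_sub]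

lemma integrable_inv_sub_mul_inv_sub {w z : ℂ} (hw : w.im ≠ 0) (hz : z.im ≠ 0) :
    Integrable fun x : ℝ => ((x : ℂ) - w)⁻¹ * ((x : ℂ) - z)⁻¹ :=
  (memLp_two_inv_ofReal_sub hw).integrable_mul (memLp_two_inv_ofReal_sub hz)

lemma hasDerivAt_log_normSq_add_arctan {w : ℂ} (hw : w.im ≠ 0) (x : ℝ) :
    HasDerivAt (fun x : ℝ => ((Real.log (normSq (x - w)) / 2 : ℝ) : ℂ)
      + (Real.arctan ((x - w.re) / w.im) : ℂ) * I) ((x - w)⁻¹) x := by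
  have hq : (x - w.re) ^ 2 + w.im ^ 2 ≠ 0 := by positivity
  simp only [normSq_ofReal_sub]
  have hsq : HasDerivAt (fun x : ℝ => (x - w.re) ^ 2 + w.im ^ 2) (2 * (x - w.re)) x := by
    simpa using (((hasDerivAt_id' x).sub_const w.re).pow 2).add_const (w.im ^ 2)
  have hlog : HasDerivAt (fun x : ℝ => Real.log ((x - w.re) ^ 2 + w.im ^ 2) / 2)
      ((x - w.re) / ((x - w.re) ^ 2 + w.im ^ 2)) x :=
    ((hsq.log hq).div_const 2).congr_deriv (by field_simp)
  have harctan : HasDerivAt (fun x : ℝ => Real.arctan ((x - w.re) / w.im))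
      (w.im / ((x - w.re) ^ 2 + w.im ^ 2)) x := by
    refine (((hasDerivAt_id' x).sub_const w.re).div_const w.im).arctan.congr_deriv ?_
    field_simp
    ring
  refine (hlog.ofReal_comp.add (harctan.ofReal_comp.mul_const I)).congr_deriv ?_
  apply Complex.ext <;> simp [Complex.inv_re, Complex.inv_im, normSq_ofReal_sub, -ofReal_div]

lemma tendsto_log_normSq_div_ofReal_sub (w z : ℂ) :
    Tendsto (fun x : ℝ => Real.log (normSq ((x - w) / (x - z)))) (cobounded ℝ) (𝓝 0) := by
  have hinv : Tendsto (fun x : ℝ => (x : ℂ)⁻¹) (cobounded ℝ) (𝓝 0) :=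
    tendsto_inv₀_cobounded.comp (RCLike.tendsto_ofReal_cobounded_cobounded ℂ)
  have hone : Tendsto (fun x : ℝ => (1 - w * (x : ℂ)⁻¹) / (1 - z * (x : ℂ)⁻¹))
      (cobounded ℝ) (𝓝 1) := by
    have h := ((tendsto_const_nhds (x := (1 : ℂ))).sub (hinv.const_mul w)).div
      ((tendsto_const_nhds (x := (1 : ℂ))).sub (hinv.const_mul z)) (by simp)
    rw [mul_zero, mul_zero, sub_zero, div_one] at h
    exact h
  have hratio : Tendsto (fun x : ℝ => ((x : ℂ) - w) / (x - z)) (cobounded ℝ) (𝓝 1) := by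
    refine hone.congr' ((eventually_ne_cobounded 0).mono fun x hx => ?_)
    have hx : (x : ℂ) ≠ 0 := by exact_mod_cast hx
    field_simp
  simpa using ((continuous_normSq.tendsto 1).comp hratio).log (by simp)

lemma tendsto_arctan_sub_div_atTop (a : ℝ) {b : ℝ} (hb : 0 < b) :
    Tendsto (fun x => Real.arctan ((x - a) / b)) atTop (𝓝 (π / 2)) :=
  (tendsto_nhds_of_tendsto_nhdsWithin tendsto_arctan_atTop).comp
    ((tendsto_atTop_add_const_right _ (-a) tendsto_id).atTop_div_const hb)

lemma tendsto_arctan_sub_div_atBot (a : ℝ) {b : ℝ} (hb : 0 < b) :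
    Tendsto (fun x => Real.arctan ((x - a) / b)) atBot (𝓝 (-(π / 2))) :=
  (tendsto_nhds_of_tendsto_nhdsWithin tendsto_arctan_atBot).comp
    ((tendsto_atBot_add_const_right _ (-a) tendsto_id).atBot_div_const hb)

lemma inv_ofReal_sub_sub_inv_ofReal_sub {w z : ℂ} (hw : w.im ≠ 0) (hz : z.im ≠ 0) (x : ℝ) :
    ((x : ℂ) - w)⁻¹ - ((x : ℂ) - z)⁻¹ = (w - z) * (((x : ℂ) - w)⁻¹ * ((x : ℂ) - z)⁻¹) := by
  rw [inv_sub_inv' (ofReal_sub_ne_zero x hw) (ofReal_sub_ne_zero x hz)]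
  ring

theorem integral_inv_sub_sub_inv_sub {w z : ℂ} (hw : 0 < w.im) (hz : z.im < 0) :
    ∫ x : ℝ, (((x : ℂ) - w)⁻¹ - ((x : ℂ) - z)⁻¹) = 2 * π * I := by
  set F : ℝ → ℂ := fun x => ((Real.log (normSq ((x - w) / (x - z))) / 2 : ℝ) : ℂ)
    + ((Real.arctan ((x - w.re) / w.im) + Real.arctan ((x - z.re) / -z.im) : ℝ) : ℂ) * I
  have hF : ∀ x : ℝ, HasDerivAt F (((x : ℂ) - w)⁻¹ - ((x : ℂ) - z)⁻¹) x := by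
    intro x
    refine ((hasDerivAt_log_normSq_add_arctan hw.ne' x).sub
      (hasDerivAt_log_normSq_add_arctan hz.ne x)).congr_of_eventuallyEq (.of_forall fun y => ?_)
    simp only [F, Pi.sub_apply]
    rw [map_div₀, Real.log_div (normSq_pos.2 (ofReal_sub_ne_zero y hw.ne')).ne'
      (normSq_pos.2 (ofReal_sub_ne_zero y hz.ne)).ne', div_neg, Real.arctan_neg]
    push_cast
    ring
  have hint : Integrable fun x : ℝ => ((x : ℂ) - w)⁻¹ - ((x : ℂ) - z)⁻¹ := by
    simp_rw [inv_ofReal_sub_sub_inv_ofReal_sub hw.ne' hz.ne]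
    exact (integrable_inv_sub_mul_inv_sub hw.ne' hz.ne).const_mul _
  have hlog := tendsto_log_normSq_div_ofReal_sub w z
  have hneg : 0 < -z.im := neg_pos.2 hz
  have hbot : Tendsto F atBot (𝓝 (-(π * I))) := by
    have : Tendsto F atBot (𝓝 (((0 / 2 : ℝ) : ℂ) + ((-(π / 2) + -(π / 2) : ℝ) : ℂ) * I)) :=
      (continuous_ofReal.tendsto _).comp
      ((hlog.mono_left IsOrderBornology.atBot_le_cobounded).div_const 2) |>.add
      (((continuous_ofReal.tendsto _).comp ((tendsto_arctan_sub_div_atBot w.re hw).add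
        (tendsto_arctan_sub_div_atBot z.re hneg))).mul_const I)
    convert this using 2
    push_cast
    ring
  have htop : Tendsto F atTop (𝓝 (π * I)) := by
    have : Tendsto F atTop (𝓝 (((0 / 2 : ℝ) : ℂ) + ((π / 2 + π / 2 : ℝ) : ℂ) * I)) :=
      (continuous_ofReal.tendsto _).comp
      ((hlog.mono_left IsOrderBornology.atTop_le_cobounded).div_const 2) |>.add
      (((continuous_ofReal.tendsto _).comp ((tendsto_arctan_sub_div_atTop w.re hw).add
        (tendsto_arctan_sub_div_atTop z.re hneg))).mul_const I)
    convert this using 2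
    push_cast
    ring
  rw [integral_of_hasDerivAt_of_tendsto hF hint hbot htop]
  ring

theorem integral_inv_sub_mul_inv_sub {w z : ℂ} (hw : 0 < w.im) (hz : z.im < 0) :
    ∫ x : ℝ, ((x : ℂ) - w)⁻¹ * ((x : ℂ) - z)⁻¹ = 2 * π * I / (w - z) := by
  have hwz : w - z ≠ 0 := fun h => by
    have := congrArg Complex.im h
    simp only [sub_im, zero_im] at this
    linarith
  rw [eq_div_iff hwz, mul_comm, ← integral_const_mul, ← integral_inv_sub_sub_inv_sub hw hz]
  simp_rw [inv_ofReal_sub_sub_inv_ofReal_sub hw.ne' hz.ne]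

lemma ofReal_norm_sum_sq {ι : Type*} (s : Finset ι) (f : ι → ℂ) :
    ((‖∑ j ∈ s, f j‖ ^ 2 : ℝ) : ℂ) = ∑ j ∈ s, ∑ k ∈ s, f j * conj (f k) := by
  rw [ofReal_pow, ← mul_conj', map_sum, Finset.sum_mul_sum]

lemma norm_sum_mul_inv_sub_sub_sq_div {ι : Type*} (s : Finset ι) (c w : ι → ℂ)
    (hw : ∀ j ∈ s, (w j).im ≠ 0) {α β : ℝ} (hαβ : α ≠ β) :
    ‖∑ j ∈ s, c j * ((α : ℂ) - w j)⁻¹ - ∑ j ∈ s, c j * ((β : ℂ) - w j)⁻¹‖ ^ 2 / (α - β) ^ 2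
      = ‖∑ j ∈ s, c j * ((α : ℂ) - w j)⁻¹ * ((β : ℂ) - w j)⁻¹‖ ^ 2 := by
  have hdiff : ∑ j ∈ s, c j * ((α : ℂ) - w j)⁻¹ - ∑ j ∈ s, c j * ((β : ℂ) - w j)⁻¹
      = ((β - α : ℝ) : ℂ) * ∑ j ∈ s, c j * ((α : ℂ) - w j)⁻¹ * ((β : ℂ) - w j)⁻¹ := by
    rw [← Finset.sum_sub_distrib, Finset.mul_sum]
    refine Finset.sum_congr rfl fun j hj => ?_
    rw [← mul_sub, inv_sub_inv' (ofReal_sub_ne_zero α (hw j hj)) (ofReal_sub_ne_zero β (hw j hj))]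
    push_cast
    ring
  have hαβ' : (α - β) ^ 2 ≠ 0 := pow_ne_zero 2 (sub_ne_zero.2 hαβ)
  rw [hdiff, norm_mul, norm_real, Real.norm_eq_abs, mul_pow, sq_abs, div_eq_iff hαβ']
  ring

theorem integral_norm_sum_mul_inv_sub_conj_sq {ι : Type*} (s : Finset ι) (a z : ι → ℂ)
    (hz : ∀ j ∈ s, (z j).im < 0) :
    ∫ β : ℝ, ((‖∑ j ∈ s, a j * ((β : ℂ) - conj (z j))⁻¹‖ ^ 2 : ℝ) : ℂ)
      = ∑ j ∈ s, ∑ k ∈ s, a j * conj (a k) * (2 * π * I / (conj (z j) - z k)) := by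
  have hconj : ∀ j ∈ s, 0 < (conj (z j)).im := fun j hj => by
    simpa using neg_pos.2 (hz j hj)
  have hterm : ∀ j ∈ s, ∀ k ∈ s, Integrable fun β : ℝ =>
      a j * conj (a k) * (((β : ℂ) - conj (z j))⁻¹ * ((β : ℂ) - z k)⁻¹) := fun j hj k hk =>
    (integrable_inv_sub_mul_inv_sub (hconj j hj).ne' (hz k hk).ne).const_mul _
  simp_rw [ofReal_norm_sum_sq, map_mul, map_inv₀, map_sub, conj_ofReal, conj_conj,
    mul_mul_mul_comm (a _)]
  rw [integral_finsetSum _ fun j hj => integrable_finsetSum _ fun k hk => hterm j hj k hk]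
  refine Finset.sum_congr rfl fun j hj => ?_
  rw [integral_finsetSum _ fun k hk => hterm j hj k hk]
  refine Finset.sum_congr rfl fun k hk => ?_
  rw [integral_const_mul, integral_inv_sub_mul_inv_sub (hconj j hj) (hz k hk)]

theorem stmt2_general (N : ℕ) (z : Fin N → ℂ) (hz : ∀ j, (z j).im < 0)
    (lam : Fin N → ℝ) (D : ℝ → ℂ)
    (hD : ∀ α : ℝ, D α = ∑ j, (lam j : ℂ) * I / (2 * (π : ℂ)) *
        (1 / (starRingEnd ℂ) ((α : ℂ) - z j)))
    (α : ℝ) :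
    ((1 / (2 * π) * ∫ β : ℝ, (‖D α - D β‖) ^ 2 / (α - β) ^ 2 : ℝ) : ℂ) =
      ∑ j, ∑ k, (lam j : ℂ) * (lam k : ℂ) / (2 * (π : ℂ)) ^ 2 *
        (1 / (((α : ℂ) - z j) * (starRingEnd ℂ) ((α : ℂ) - z k))) *
        (I / ((starRingEnd ℂ) (z k) - z j)) := by
  set c : Fin N → ℂ := fun j => (lam j : ℂ) * I / (2 * (π : ℂ))
  set a : Fin N → ℂ := fun j => c j * ((α : ℂ) - conj (z j))⁻¹
  have hD' : ∀ β : ℝ, D β = ∑ j, c j * ((β : ℂ) - conj (z j))⁻¹ := fun β => by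
    simp only [hD, map_sub, conj_ofReal, one_div, c]
  have hconj : ∀ j ∈ Finset.univ, (conj (z j)).im ≠ 0 := fun j _ => by
    simpa using (hz j).ne
  have hae : (fun β : ℝ => ‖D α - D β‖ ^ 2 / (α - β) ^ 2)
      =ᵐ[volume] fun β => ‖∑ j, a j * ((β : ℂ) - conj (z j))⁻¹‖ ^ 2 := by
    filter_upwards [Measure.ae_ne volume α] with β hβ
    rw [hD', hD', norm_sum_mul_inv_sub_sub_sq_div _ _ _ hconj hβ.symm]
  rw [integral_congr_ae hae, ofReal_mul, ← integral_complex_ofReal,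
    integral_norm_sum_mul_inv_sub_conj_sq _ _ _ fun j _ => hz j, Finset.sum_comm, Finset.mul_sum]
  refine Finset.sum_congr rfl fun k _ => ?_
  rw [Finset.mul_sum]
  refine Finset.sum_congr rfl fun j _ => ?_
  have hπ : (π : ℂ) ≠ 0 := ofReal_ne_zero.2 pi_ne_zero
  simp only [a, c, map_mul, map_div₀, map_inv₀, map_sub, conj_ofReal, conj_I, map_ofNat, conj_conj,
    one_div, mul_inv, ofReal_mul, ofReal_inv, ofReal_ofNat]
  field_simp
  ring_nf
  rw [I_sq]
  ring

/-- For `N` point vortices `z j` in the lower half plane with strengths `λ j`, and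
`D(α) = ∑ j (λ j i / (2π)) / conj(α - z j)`, for every real `α`:
`(1/(2π)) ∫ |D(α)-D(β)|²/(α-β)² dβ
  = ∑_{j,k} (λ j λ k/(2π)²) (1/((α - z j) conj(α - z k))) (i/(conj(z k) - z j))`. -/
theorem stmt2 (N : ℕ) (hN : 1 ≤ N) (z : Fin N → ℂ) (hz : ∀ j, (z j).im < 0)
    (lam : Fin N → ℝ) (D : ℝ → ℂ)
    (hD : ∀ α : ℝ, D α = ∑ j, (lam j : ℂ) * I / (2 * (π : ℂ)) *
        (1 / (starRingEnd ℂ) ((α : ℂ) - z j)))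
    (α : ℝ) :
    ((1 / (2 * π) * ∫ β : ℝ, (‖D α - D β‖) ^ 2 / (α - β) ^ 2 : ℝ) : ℂ) =
      ∑ j, ∑ k, (lam j : ℂ) * (lam k : ℂ) / (2 * (π : ℂ)) ^ 2 *
        (1 / (((α : ℂ) - z j) * (starRingEnd ℂ) ((α : ℂ) - z k))) *
        (I / ((starRingEnd ℂ) (z k) - z j)) :=
  stmt2_general N z hz lam D hD α
end

section
/- Let $\lambda \in \mathbb{R}$, $x \in \mathbb{R}$, $y < 0$, and consider a single point vortex at $z_1 = x + iy$ below the flat interface $\mathbb{R}$, generating velocity $v(\alpha) = \frac{\lambda i}{2\pi} \frac{1}{\overline{\alpha - z_1}}$ on the interface. Define $A_1(\alpha) = 1 + \frac{\lambda^2}{4\pi^2}\frac{1}{|\alpha - z_1|^2}\frac{1}{2|y|} + \frac{\lambda^2}{2\pi^2}\frac{y}{|\alpha - z_1|^4}$. Then: (1) if $\frac{\lambda^2}{|y|^3} < \frac{8\pi^2}{3}$, then $\inf_{\alpha \in \mathbb{R}} A_1(\alpha) \geq 1 - \frac{3}{8\pi^2}\frac{\lambda^2}{|y|^3} > 0$;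 (2) if $\frac{\lambda^2}{|y|^3} > \frac{8\pi^2}{3}$, then there exists $\alpha \in \mathbb{R}$ with $A_1(\alpha) < 0$; (3) if $\frac{\lambda^2}{|y|^3} = \frac{8\pi^2}{3}$, then $A_1(\alpha) > 0$ for all $\alpha \neq x$, and $A_1(x) = 0$. -/
open Complex Real

/-! Writing `t = (α - x)²`, so that `|α - z₁|² = t + y²`, the function `A₁` splits exactly as
`A₁ = 1 - 3λ²/(8π²|y|³) + λ² t (3t + 7y²) / (8π²|y|³ (t + y²)²)`. The last term vanishes at
`α = x` and is positive elsewhere when `λ ≠ 0`, so the constant term is the minimum of `A₁`,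
attained exactly at `α = x`, and all three cases are read off from its sign. -/

lemma norm_ofReal_sub_sq (α x y : ℝ) :
    ‖(α : ℂ) - ((x : ℂ) + (y : ℂ) * I)‖ ^ 2 = (α - x) ^ 2 + y ^ 2 := by
  rw [Complex.sq_norm, Complex.normSq_apply]
  simp only [sub_re, sub_im, add_re, add_im, ofReal_re, ofReal_im, mul_re, mul_im, I_re, I_im]
  ring

noncomputable def vortexExcess (lam y t : ℝ) : ℝ :=
  lam ^ 2 * t * (3 * t + 7 * y ^ 2) / (8 * π ^ 2 * |y| ^ 3 * (t + y ^ 2) ^ 2)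

lemma vortexExcess_nonneg (lam y : ℝ) {t : ℝ} (ht : 0 ≤ t) : 0 ≤ vortexExcess lam y t := by
  unfold vortexExcess
  positivity

lemma vortexExcess_pos {lam y t : ℝ} (hlam : lam ≠ 0) (hy : y ≠ 0) (ht : 0 < t) :
    0 < vortexExcess lam y t := by
  unfold vortexExcess
  positivity

@[simp]
lemma vortexExcess_zero (lam y : ℝ) : vortexExcess lam y 0 = 0 := by
  simp [vortexExcess]

lemma taylorSign_eq_add_vortexExcess (lam : ℝ) {y t : ℝ} (hy : y < 0) (hd : t + y ^ 2 ≠ 0) :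
    1 + lam ^ 2 / (4 * π ^ 2) * (1 / (t + y ^ 2)) * (1 / (2 * |y|))
        + lam ^ 2 / (2 * π ^ 2) * (y / (t + y ^ 2) ^ 2)
      = 1 - 3 / (8 * π ^ 2) * (lam ^ 2 / |y| ^ 3) + vortexExcess lam y t := by
  have hy0 : y ≠ 0 := hy.ne
  rw [vortexExcess, abs_of_neg hy]
  field_simp
  ring

lemma one_sub_three_div_eq (q : ℝ) :
    1 - 3 / (8 * π ^ 2) * q = 3 / (8 * π ^ 2) * (8 * π ^ 2 / 3 - q) := by
  field_simp

/-- Taylor sign quantity for a single point vortex `z₁ = x + iy`, `y < 0`, below the flat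
interface: with
`A₁(α) = 1 + (λ²/(4π²))(1/|α-z₁|²)(1/(2|y|)) + (λ²/(2π²)) y/|α-z₁|⁴`,
(1) if `λ²/|y|³ < 8π²/3` then `inf A₁ ≥ 1 - (3/(8π²)) λ²/|y|³ > 0`;
(2) if `λ²/|y|³ > 8π²/3` then `A₁` is somewhere negative;
(3) if `λ²/|y|³ = 8π²/3` then `A₁ > 0` away from `α = x` and `A₁(x) = 0`. -/
theorem stmt3 (x y lam : ℝ) (hy : y < 0) (z₁ : ℂ) (hz : z₁ = (x : ℂ) + (y : ℂ) * I)
    (A₁ : ℝ → ℝ)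
    (hA : ∀ α : ℝ, A₁ α =
        1 + lam ^ 2 / (4 * π ^ 2) * (1 / (‖(α : ℂ) - z₁‖) ^ 2) * (1 / (2 * |y|))
          + lam ^ 2 / (2 * π ^ 2) * (y / (‖(α : ℂ) - z₁‖) ^ 4)) :
    (lam ^ 2 / |y| ^ 3 < 8 * π ^ 2 / 3 →
      0 < 1 - 3 / (8 * π ^ 2) * (lam ^ 2 / |y| ^ 3) ∧
        ∀ α : ℝ, 1 - 3 / (8 * π ^ 2) * (lam ^ 2 / |y| ^ 3) ≤ A₁ α) ∧
    (8 * π ^ 2 / 3 < lam ^ 2 / |y| ^ 3 → ∃ α : ℝ, A₁ α < 0) ∧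
    (lam ^ 2 / |y| ^ 3 = 8 * π ^ 2 / 3 →
      (∀ α : ℝ, α ≠ x → 0 < A₁ α) ∧ A₁ x = 0) := by
  have hsplit : ∀ α, A₁ α = 1 - 3 / (8 * π ^ 2) * (lam ^ 2 / |y| ^ 3)
      + vortexExcess lam y ((α - x) ^ 2) := fun α => by
    have hd : (α - x) ^ 2 + y ^ 2 ≠ 0 := by
      have := hy.ne
      positivity
    rw [hA, hz, show (4 : ℕ) = 2 * 2 from rfl, pow_mul, norm_ofReal_sub_sq,
      taylorSign_eq_add_vortexExcess lam hy hd]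
  have hc : (0 : ℝ) < 3 / (8 * π ^ 2) := by positivity
  rw [one_sub_three_div_eq] at hsplit ⊢
  refine ⟨fun h => ⟨by nlinarith, fun α => ?_⟩, fun h => ⟨x, ?_⟩, fun h => ⟨fun α hα => ?_, ?_⟩⟩
  · linarith [hsplit α, vortexExcess_nonneg lam y (sq_nonneg (α - x))]
  · rw [hsplit, sub_self, zero_pow two_ne_zero, vortexExcess_zero]
    nlinarith
  · have hlam : lam ≠ 0 := by
      rintro rfl
      have : (0 : ℝ) < 8 * π ^ 2 / 3 := by positivity
      simp only [ne_eq, OfNat.ofNat_ne_zero, not_false_eq_true, zero_pow, zero_div] at h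
      linarith
    have hαx : α - x ≠ 0 := sub_ne_zero.mpr hα
    have hpos := vortexExcess_pos hlam hy.ne (by positivity : 0 < (α - x) ^ 2)
    rw [hsplit, h, sub_self, mul_zero, zero_add]
    exact hpos
  · rw [hsplit, h, sub_self, mul_zero, sub_self, zero_pow two_ne_zero, vortexExcess_zero,
      zero_add]
end
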